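/- arXiv:2402.04622 — 2 statements merged into one kernel-verified Lean document; each statement's English description precedes it below -/
import Mathlib

section
/- Let $n \ge 1$ and $1 \le k \le n$. If $\lambda \in \overline{\Gamma_k^+} \subset \mathbb{R}^n$, then for every index $1 \le i \le n$ one has $\sigma_{k-1}(\lambda \setminus i) \ge 0$, where $\lambda\setminus i$ is the $(n-1)$-tuple obtained from $\lambda$ by deleting the $i$-th entry. (Equivalently: the $(k-1)$-th Newton transformation $T_{k-1}$ is positive semidefinite at any symmetric matrix whose eigenvalue vector lies in $\overline{\Gamma_k^+}$.) -/
open Finset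

/-- The `k`-th elementary symmetric function of the values of `lam` over the index
set `s ⊆ {1,…,n}`. -/
noncomputable def esymmOn {n : ℕ} (s : Finset (Fin n)) (k : ℕ) (lam : Fin n → ℝ) : ℝ :=
  ∑ t ∈ s.powersetCard k, ∏ i ∈ t, lam i

/-- The `k`-th elementary symmetric function `σ_k(λ)` on `ℝ^n`. -/
noncomputable def esymm (n k : ℕ) (lam : Fin n → ℝ) : ℝ :=
  esymmOn Finset.univ k lam

/-- The normalized `k`-th elementary symmetric function `H_k(λ) = σ_k(λ)/C(n,k)`. -/
noncomputable def Hnorm (n k : ℕ) (lam : Fin n → ℝ) : ℝ :=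
  esymm n k lam / (n.choose k)

/-- The Gårding cone `Γ_k^+ = {λ : σ_i(λ) > 0 for 1 ≤ i ≤ k}`. -/
def GammaPlus (n k : ℕ) : Set (Fin n → ℝ) :=
  {lam | ∀ i : ℕ, 1 ≤ i → i ≤ k → 0 < esymm n i lam}

/-!
Newton's inequality `σ_k σ_{k+2} ≤ σ_{k+1}²` holds for every real vector: differentiating
`∏ (X + λ_j)` removes the top coefficients, reversing and differentiating again removes the
bottom ones, and both operations preserve real-rootedness (Rolle), so one ends with a real-rooted
quadratic whose discriminant is nonnegative.

For `λ ∈ Γ_{k+2}` and `μ = λ ∖ i`, the expansion `σ_j(λ) = σ_j(μ) + λ_i σ_{j-1}(μ)` gives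
`σ_{k+1}(μ) + λ_i σ_k(μ) > 0` and `σ_{k+2}(μ) + λ_i σ_{k+1}(μ) > 0`. If `σ_k(μ) > 0` (induction)
and `σ_{k+1}(μ) ≤ 0`, these force `σ_k(μ) σ_{k+2}(μ) > σ_{k+1}(μ)²`, against Newton. Hence
`σ_{k-1}(λ ∖ i) > 0` on `Γ_k`, and the closure follows by continuity.
-/

open Polynomial

namespace Multiset

theorem esymm_cons {R : Type*} [CommSemiring R] (a : R) (s : Multiset R) (k : ℕ) :
    (a ::ₘ s).esymm (k + 1) = s.esymm (k + 1) + a * s.esymm k := by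
  simp [esymm, powersetCard_cons, sum_map_mul_left]

theorem esymm_eq_zero_of_card_lt {R : Type*} [CommSemiring R] {s : Multiset R} {k : ℕ}
    (h : card s < k) : s.esymm k = 0 := by
  simp [esymm, powersetCard_eq_empty _ h]

theorem natDegree_prod_X_add_C {R : Type*} [CommSemiring R] [Nontrivial R] (s : Multiset R) :
    (s.map fun r => X + C r).prod.natDegree = card s := by
  rw [natDegree_multiset_prod_of_monic _ (by simp [monic_X_add_C])]
  simp

end Multiset

namespace Polynomial

theorem Splits.derivative {p : ℝ[X]} (hp : p.Splits) : p.derivative.Splits := by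
  have h₁ := splits_iff_card_roots.1 hp
  have h₂ := card_roots_le_derivative p
  have h₃ := card_roots' p.derivative
  have h₄ := natDegree_derivative_le p
  rw [splits_iff_card_roots]
  omega

theorem Splits.iterate_derivative {p : ℝ[X]} (hp : p.Splits) (k : ℕ) :
    (Polynomial.derivative^[k] p).Splits := by
  induction k with
  | zero => exact hp
  | succ k ih => rw [Function.iterate_succ_apply']; exact ih.derivative

theorem Splits.hasseDeriv {p : ℝ[X]} (hp : p.Splits) (k : ℕ) :
    (Polynomial.hasseDeriv k p).Splits := by
  have h : Polynomial.derivative^[k] p = C (k.factorial : ℝ) * Polynomial.hasseDeriv k p := by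
    rw [← factorial_smul_hasseDeriv, LinearMap.smul_apply, nsmul_eq_mul, C_eq_natCast]
  have hk : (k.factorial : ℝ) ≠ 0 := by positivity
  have := (hp.iterate_derivative k).C_mul (k.factorial : ℝ)⁻¹
  rwa [h, ← mul_assoc, ← C_mul, inv_mul_cancel₀ hk, C_1, one_mul] at this

theorem Splits.reverse {K : Type*} [Field K] {p : K[X]} (hp : p.Splits) : p.reverse.Splits := by
  induction hp using Submonoid.closure_induction with
  | mem f hf =>
    rcases hf with ⟨a, rfl⟩ | ⟨a, rfl⟩
    · simp only [reverse_C]; exact Splits.C a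
    · exact .of_natDegree_le_one ((reverse_natDegree_le _).trans (natDegree_X_add_C a).le)
  | one => rw [← C_1, reverse_C]; exact Splits.C 1
  | mul f g _ _ hf hg => rw [reverse_mul_of_domain]; exact hf.mul hg

theorem Splits.discrim_nonneg {K : Type*} [Field K] [LinearOrder K] [IsStrictOrderedRing K]
    {p : K[X]} (hp : p.Splits) (hdeg : p.natDegree ≤ 2) :
    0 ≤ discrim (p.coeff 2) (p.coeff 1) (p.coeff 0) := by
  by_cases h₂ : p.coeff 2 = 0
  · simp [discrim, h₂, sq_nonneg]
  have hdeg₂ : p.natDegree = 2 := le_antisymm hdeg (le_natDegree_of_ne_zero h₂)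
  obtain ⟨x, hx⟩ := hp.exists_eval_eq_zero fun h => by
    simp [natDegree_eq_of_degree_eq_some h] at hdeg₂
  rw [eval_eq_sum_range, hdeg₂] at hx
  simp only [Finset.sum_range_succ, Finset.sum_range_zero] at hx
  rw [discrim_eq_sq_of_quadratic_eq_zero (x := x) (by linear_combination hx)]
  positivity

end Polynomial

namespace Multiset

theorem exists_splits_coeff_eq_esymm (s : Multiset ℝ) {k d : ℕ} (hd : card s = d + (k + 2)) :
    ∃ S : ℝ[X], S.Splits ∧ S.natDegree ≤ 2 ∧
      ∀ j ≤ 2, S.coeff j = (k + j).choose k * ((d + (2 - j)).choose d * s.esymm (k + j)) := by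
  set P := (s.map fun r => X + C r).prod
  have hP : P.Splits := Splits.multisetProd (by simp [Splits.X_add_C])
  set Q := hasseDeriv d P
  have hQdeg : Q.natDegree = k + 2 := by
    rw [natDegree_hasseDeriv, natDegree_prod_X_add_C]
    omega
  have hQ : ∀ j ≤ k + 2, Q.coeff j = (j + d).choose d * s.esymm (k + 2 - j) := by
    intro j hj
    rw [hasseDeriv_coeff, prod_X_add_C_coeff _ (by omega),
      show card s - (j + d) = k + 2 - j by omega]
  refine ⟨hasseDeriv k Q.reverse, ((hP.hasseDeriv d).reverse).hasseDeriv k, ?_, ?_⟩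
  · have := reverse_natDegree_le Q
    exact (natDegree_hasseDeriv_le _ _).trans (by omega)
  · intro j hj
    rw [hasseDeriv_coeff, coeff_reverse, hQdeg, revAt_le (by omega), hQ _ (by omega),
      show k + 2 - (j + k) = 2 - j by omega, show k + 2 - (2 - j) = k + j by omega,
      add_comm j k, add_comm (2 - j) d]

theorem esymm_mul_esymm_le_sq (s : Multiset ℝ) (k : ℕ) :
    s.esymm k * s.esymm (k + 2) ≤ s.esymm (k + 1) ^ 2 := by
  obtain hlt | hle := lt_or_ge (card s) (k + 2)
  · rw [esymm_eq_zero_of_card_lt hlt, mul_zero]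
    positivity
  obtain ⟨d, hd⟩ := Nat.exists_eq_add_of_le' hle
  obtain ⟨S, hS, hSdeg, hS'⟩ := s.exists_splits_coeff_eq_esymm hd
  have hdisc := hS.discrim_nonneg hSdeg
  have hchoose (n : ℕ) : ((n + 2).choose n : ℝ) = (n + 2) * (n + 1) / 2 := by
    rw [Nat.choose_symm_add, Nat.cast_choose_two]
    push_cast
    ring
  rw [discrim, hS' 0 (by norm_num), hS' 1 (by norm_num), hS' 2 (by norm_num)] at hdisc
  norm_num [Nat.choose_succ_self_right, hchoose] at hdisc
  set e₀ := s.esymm k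
  set e₁ := s.esymm (k + 1)
  set e₂ := s.esymm (k + 2)
  have hkd : (0 : ℝ) < (k + 1) * (d + 1) := by positivity
  have key : (k + 2) * (d + 2) * (e₀ * e₂) ≤ (k + 1) * (d + 1) * e₁ ^ 2 :=
    le_of_mul_le_mul_left (by linear_combination hdisc) hkd
  rcases le_or_gt (e₀ * e₂) 0 with h | h
  · exact h.trans (sq_nonneg _)
  · have hfactor : (k + 1) * (d + 1) * (e₀ * e₂) ≤ (k + 2) * (d + 2) * (e₀ * e₂) := by
      gcongr <;> linarith
    exact le_of_mul_le_mul_left (hfactor.trans key) hkd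

end Multiset

theorem esymmOn_eq_esymm_map {n : ℕ} (s : Finset (Fin n)) (k : ℕ) (lam : Fin n → ℝ) :
    esymmOn s k lam = (s.val.map lam).esymm k :=
  (Finset.esymm_map_val lam s k).symm

theorem continuous_esymmOn {n : ℕ} (s : Finset (Fin n)) (k : ℕ) :
    Continuous (esymmOn s k) := by
  unfold esymmOn
  fun_prop

theorem esymmOn_zero {n : ℕ} (s : Finset (Fin n)) (lam : Fin n → ℝ) : esymmOn s 0 lam = 1 := by
  simp [esymmOn]

theorem esymmOn_mul_esymmOn_le_sq {n : ℕ} (s : Finset (Fin n)) (k : ℕ) (lam : Fin n → ℝ) :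
    esymmOn s k lam * esymmOn s (k + 2) lam ≤ esymmOn s (k + 1) lam ^ 2 := by
  simp only [esymmOn_eq_esymm_map]
  exact Multiset.esymm_mul_esymm_le_sq _ k

theorem esymmOn_succ_of_mem {n : ℕ} {s : Finset (Fin n)} {i : Fin n} (hi : i ∈ s) (k : ℕ)
    (lam : Fin n → ℝ) :
    esymmOn s (k + 1) lam =
      esymmOn (s.erase i) (k + 1) lam + lam i * esymmOn (s.erase i) k lam := by
  simp only [esymmOn_eq_esymm_map, Finset.erase_val]
  rw [← Multiset.esymm_cons, ← Multiset.map_cons, Multiset.cons_erase (Finset.mem_def.1 hi)]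

theorem antitone_GammaPlus (n : ℕ) : Antitone (GammaPlus n) :=
  fun _ _ hkl _ hlam j hj hjk => hlam j hj (hjk.trans hkl)

theorem esymmOn_erase_pos_of_mem_GammaPlus_succ {n k : ℕ} {lam : Fin n → ℝ}
    (hlam : lam ∈ GammaPlus n (k + 1)) (i : Fin n) : 0 < esymmOn (univ.erase i) k lam := by
  induction k with
  | zero => simp [esymmOn_zero]
  | succ k ih =>
    have ha := ih (antitone_GammaPlus n (by omega) hlam)
    have h₁ := hlam (k + 1) (by omega) (by omega)
    have h₂ := hlam (k + 2) (by omega) le_rfl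
    rw [esymm, esymmOn_succ_of_mem (mem_univ i)] at h₁ h₂
    have hN := esymmOn_mul_esymmOn_le_sq (univ.erase i) k lam
    by_contra! hb
    nlinarith [mul_pos ha h₂, mul_nonneg (neg_nonneg.2 hb) h₁.le]

theorem esymmOn_erase_pos_of_mem_GammaPlus {n k : ℕ} {lam : Fin n → ℝ}
    (hlam : lam ∈ GammaPlus n k) (i : Fin n) : 0 < esymmOn (univ.erase i) (k - 1) lam := by
  cases k with
  | zero => simp [esymmOn_zero]
  | succ k => exact esymmOn_erase_pos_of_mem_GammaPlus_succ hlam i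

theorem newton_tensor_nonneg_general (n k : ℕ)
    (lam : Fin n → ℝ) (hlam : lam ∈ closure (GammaPlus n k)) :
    ∀ i : Fin n, 0 ≤ esymmOn (Finset.univ.erase i) (k - 1) lam := by
  intro i
  have hclosed : IsClosed {v : Fin n → ℝ | 0 ≤ esymmOn (univ.erase i) (k - 1) v} :=
    isClosed_le continuous_const (continuous_esymmOn _ _)
  exact closure_minimal (fun v hv => (esymmOn_erase_pos_of_mem_GammaPlus hv i).le) hclosed hlam

/-- If `λ ∈ closure Γ_k^+`, then `σ_{k-1}(λ∖i) ≥ 0` for each `i`, i.e. the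
`(k-1)`-th Newton transformation is positive semidefinite. -/
theorem newton_tensor_nonneg (n k : ℕ) (hn : 1 ≤ n) (hk1 : 1 ≤ k) (hk : k ≤ n)
    (lam : Fin n → ℝ) (hlam : lam ∈ closure (GammaPlus n k)) :
    ∀ i : Fin n, 0 ≤ esymmOn (Finset.univ.erase i) (k - 1) lam :=
  newton_tensor_nonneg_general n k lam hlam
end

section
/- Let $n \ge 2$ and let $k$ be an integer with $1 \le k \le n/2$. For every $\kappa = (\kappa_1,\dots,\kappa_n) \in \mathbb{R}^n$, writing $\tilde\kappa = (\kappa_1-1,\dots,\kappa_n-1)$, one has $\sum \prod_{m=1}^{k} \big( \kappa_{i_{2m-1}} \kappa_{i_{2m}} - 1 \big) = \binom{n}{2k} (2k)! \sum_{j=0}^{k} 2^{j} \binom{k}{j} H_{2k-j}(\tilde\kappa)$, where the sum on the left is over all $(2k)$-tuples $(i_1, \dots, i_{2k})$ of pairwise distinct indices in $\{1,\dots,n\}$. -/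
open Finset

/-!
Put `μ = κ - 1`. Then `κ_a κ_b - 1 = μ_a μ_b + μ_a + μ_b` is the sum of `∏_{p ∈ S} μ_p` over the
nonempty `S ⊆ {a, b}`, so the left-hand side is a sum, over choices of a nonempty subset of each
pair `{2m, 2m+1}` with union `S`, of `∑_{f injective} ∏_{p ∈ S} μ_{f p}`. As the permutations of
`Fin n` act transitively on the `t`-subsets, every `t`-subset is the image of `S` under equally
many injections `f`, so that sum is `n (n-1) ⋯ (n-2k+1) H_{|S|}(μ)`. Finally, the number of
choices with `|S| = 2k - j` is `C(k,j) 2^j`, the coefficient of `X^{2k-j}` in `(2X + X²)^k`.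
-/

theorem Finset.exists_perm_image_eq {α : Type*} [DecidableEq α] {U V : Finset α}
    (h : #U = #V) : ∃ σ : Equiv.Perm α, U.image σ = V := by
  obtain ⟨σ, hσ⟩ := (Set.powersetCard.isPretransitive (α := α) (n := #U)).exists_smul_eq
    (⟨U, rfl⟩ : Set.powersetCard α #U) ⟨V, h.symm⟩
  exact ⟨σ, by simpa [Finset.smul_finset_def] using congrArg Subtype.val hσ⟩

theorem Finset.sum_mul_mul_card_of_forall_eq {β R : Type*} [CommSemiring R] {P : Finset β}
    {c g : β → R} (hc : ∀ U ∈ P, ∀ V ∈ P, c U = c V) :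
    (∑ U ∈ P, c U * g U) * #P = (∑ U ∈ P, c U) * ∑ U ∈ P, g U := by
  rcases P.eq_empty_or_nonempty with rfl | ⟨U₀, hU₀⟩
  · simp
  rw [sum_congr rfl fun U hU => by rw [hc U hU U₀ hU₀], sum_congr rfl fun U hU => hc U hU U₀ hU₀,
    ← mul_sum, sum_const, nsmul_eq_mul]
  ring

section Injective

variable {ι α : Type*} [Fintype ι] [DecidableEq ι] [Fintype α] [DecidableEq α]

theorem card_filter_injective :
    #(univ.filter fun f : ι → α => Function.Injective f) =
      (Fintype.card α).descFactorial (Fintype.card ι) := by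
  rw [← Fintype.card_subtype, Fintype.card_congr (Equiv.subtypeInjectiveEquivEmbedding ι α),
    Fintype.card_embedding_eq]

theorem card_filter_injective_image_eq_of_card_eq (T : Finset ι) {U V : Finset α}
    (h : #U = #V) :
    #(univ.filter fun f : ι → α => Function.Injective f ∧ T.image f = U) =
      #(univ.filter fun f : ι → α => Function.Injective f ∧ T.image f = V) := by
  obtain ⟨σ, rfl⟩ := exists_perm_image_eq h
  refine card_nbij' (σ ∘ ·) (σ.symm ∘ ·) ?_ ?_ (fun f _ => by simp [Function.comp_def])
    (fun f _ => by simp [Function.comp_def])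
  · intro f hf
    simp only [coe_filter, mem_univ, true_and, Set.mem_ofPred_eq] at hf ⊢
    rw [← image_image, hf.2]
    exact ⟨σ.injective.comp hf.1, rfl⟩
  · intro f hf
    simp only [coe_filter, mem_univ, true_and, Set.mem_ofPred_eq] at hf ⊢
    rw [← image_image, hf.2, image_image]
    simp [σ.symm.injective.comp hf.1]

theorem sum_filter_injective_prod_mul_choose {R : Type*} [CommSemiring R] (T : Finset ι)
    (μ : α → R) :
    (∑ f ∈ univ.filter (fun f : ι → α => Function.Injective f), ∏ p ∈ T, μ (f p)) *
        (Fintype.card α).choose #T =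
      (Fintype.card α).descFactorial (Fintype.card ι) *
        ∑ U ∈ powersetCard #T univ, ∏ x ∈ U, μ x := by
  set P := powersetCard #T (univ : Finset α)
  have hmaps : ∀ f ∈ univ.filter (fun f : ι → α => Function.Injective f), T.image f ∈ P :=
    fun f hf => mem_powersetCard.2 ⟨subset_univ _, card_image_of_injective _ (mem_filter.1 hf).2⟩
  have hfibre (U : Finset α) :
      (univ.filter fun f : ι → α => Function.Injective f).filter (fun f => T.image f = U) =
        univ.filter fun f : ι → α => Function.Injective f ∧ T.image f = U :=
    filter_filter _ _ _
  calc _ = (∑ U ∈ P, (#(univ.filter fun f : ι → α => Function.Injective f ∧ T.image f = U) : R) *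
          ∏ x ∈ U, μ x) * #P := by
        rw [← sum_fiberwise_of_maps_to hmaps, card_powersetCard, card_univ]
        congr 1
        refine sum_congr rfl fun U _ => ?_
        rw [hfibre, ← nsmul_eq_mul, ← sum_const]
        refine sum_congr rfl fun f hf => ?_
        obtain ⟨hinj, rfl⟩ := (mem_filter.1 hf).2
        exact (prod_image fun x _ y _ h => hinj h).symm
    _ = _ := by
        rw [sum_mul_mul_card_of_forall_eq fun U hU V hV => by
          rw [card_filter_injective_image_eq_of_card_eq T ((mem_powersetCard.1 hU).2.trans
            (mem_powersetCard.1 hV).2.symm)], ← Nat.cast_sum, ← card_filter_injective]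
        simp_rw [← hfibre]
        rw [← card_eq_sum_card_fiberwise hmaps]

end Injective

theorem sum_filter_injective_prod_eq_descFactorial_mul_Hnorm {ι : Type*} [Fintype ι]
    [DecidableEq ι] {n : ℕ} (T : Finset ι) (μ : Fin n → ℝ) :
    ∑ f ∈ univ.filter (fun f : ι → Fin n => Function.Injective f), ∏ p ∈ T, μ (f p) =
      n.descFactorial (Fintype.card ι) * Hnorm n #T μ := by
  rcases le_or_gt #T n with hT | hT
  · have hchoose : (n.choose #T : ℝ) ≠ 0 := Nat.cast_ne_zero.2 (Nat.choose_pos hT).ne'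
    rw [Hnorm, esymm, esymmOn, mul_div_assoc', eq_div_iff hchoose]
    simpa using sum_filter_injective_prod_mul_choose T μ
  · have hι : n < Fintype.card ι := hT.trans_le (card_le_univ T)
    have hempty : univ.filter (fun f : ι → Fin n => Function.Injective f) = ∅ :=
      filter_eq_empty_iff.2 fun f _ hf =>
        hι.not_ge (by simpa using Fintype.card_le_of_injective f hf)
    simp [hempty, Nat.descFactorial_eq_zero_iff_lt.2 hι]

theorem Finset.prod_one_add_sub_one {β R : Type*} [DecidableEq β] [CommRing R] (s : Finset β)
    (x : β → R) : ∏ b ∈ s, (1 + x b) - 1 = ∑ t ∈ s.powerset.erase ∅, ∏ b ∈ t, x b := by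
  rw [prod_one_add, sum_erase_eq_sub (empty_mem_powerset s), prod_empty]

theorem Finset.prod_prod_one_add_sub_one {ι β R : Type*} [Fintype ι] [DecidableEq ι] [Fintype β]
    [DecidableEq β] [CommRing R] (x : ι → β → R) :
    ∏ i, (∏ b, (1 + x i b) - 1) =
      ∑ c ∈ Fintype.piFinset fun _ : ι => (univ : Finset β).powerset.erase ∅,
        ∏ p ∈ univ.sigma c, x p.1 p.2 := by
  simp_rw [prod_one_add_sub_one, prod_univ_sum, prod_sigma]

open Polynomial in
theorem sum_piFinset_nonempty_subsets_fin_two (k : ℕ) (G : ℕ → ℝ) :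
    ∑ c ∈ Fintype.piFinset fun _ : Fin k => (univ : Finset (Fin 2)).powerset.erase ∅,
        G (∑ m, #(c m)) =
      ∑ j ∈ range (k + 1), (2 : ℝ) ^ j * ((k.choose j : ℕ) : ℝ) * G (2 * k - j) := by
  -- `L` sends `X ^ d` to `G d`; the left-hand side is `L` of the generating function `(2X + X²)^k`.
  set L : ℝ[X] →ₗ[ℝ] ℝ := lsum fun d => G d • LinearMap.id
  have hL (d : ℕ) : L (X ^ d) = G d := by
    rw [lsum_apply, X_pow_eq_monomial, sum_monomial_index] <;> simp
  have hpair :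
      ∑ s ∈ (univ : Finset (Fin 2)).powerset.erase ∅, (X : ℝ[X]) ^ #s = 2 * X + X ^ 2 := by
    simp_rw [← prod_const, ← prod_one_add_sub_one, prod_const, card_univ, Fintype.card_fin]
    ring
  calc _ = L (∏ _m : Fin k, ∑ s ∈ (univ : Finset (Fin 2)).powerset.erase ∅, X ^ #s) := by
        simp_rw [prod_univ_sum, map_sum, prod_pow_eq_pow_sum, hL]
    _ = _ := by
        rw [hpair, prod_const, card_univ, Fintype.card_fin, add_pow, map_sum]
        refine sum_congr rfl fun j hj => ?_
        have hjk : j + 2 * (k - j) = 2 * k - j := by have := mem_range.1 hj; omega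
        have hterm : (2 * X) ^ j * (X ^ 2) ^ (k - j) * (k.choose j : ℝ[X]) =
            ((2 : ℝ) ^ j * k.choose j) • X ^ (2 * k - j) := by
          rw [← hjk, smul_eq_C_mul, pow_add, pow_mul]
          simp only [map_mul, map_pow, map_ofNat, map_natCast]
          ring
        rw [hterm, map_smul, hL, smul_eq_mul]

def finPairEmbedding (k : ℕ) : (Σ _ : Fin k, Fin 2) ↪ Fin (2 * k) where
  toFun p := ⟨2 * p.1 + p.2, by omega⟩
  inj' := by
    rintro ⟨m, b⟩ ⟨m', b'⟩ h
    simp only [Fin.mk.injEq] at h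
    obtain rfl : m = m' := by omega
    obtain rfl : b = b' := by omega
    rfl

/-- The Gauss–Bonnet curvature `L_k` of a hypersurface in hyperbolic space, expressed
through principal curvatures `κ`, equals
`C(n,2k) (2k)! ∑_{j=0}^k 2^j C(k,j) H_{2k-j}(κ̃)` where `κ̃ = κ - (1,…,1)`. -/
theorem gauss_bonnet_curvature_formula (n k : ℕ) (κ : Fin n → ℝ) :
    ∑ f ∈ Finset.univ.filter (fun f : Fin (2 * k) → Fin n => Function.Injective f),
        ∏ m : Fin k,
          (κ (f ⟨2 * m.1, by have := m.2; omega⟩) *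
            κ (f ⟨2 * m.1 + 1, by have := m.2; omega⟩) - 1) =
      ((n.choose (2 * k) : ℕ) : ℝ) * ((Nat.factorial (2 * k) : ℕ) : ℝ) *
        ∑ j ∈ Finset.range (k + 1),
          (2 : ℝ) ^ j * ((k.choose j : ℕ) : ℝ) * Hnorm n (2 * k - j) (fun i => κ i - 1) := by
  set μ : Fin n → ℝ := fun i => κ i - 1
  have hexpand (f : Fin (2 * k) → Fin n) :
      ∏ m : Fin k, (κ (f ⟨2 * m.1, by omega⟩) * κ (f ⟨2 * m.1 + 1, by omega⟩) - 1) =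
        ∑ c ∈ Fintype.piFinset fun _ => (univ : Finset (Fin 2)).powerset.erase ∅,
          ∏ q ∈ (univ.sigma c).map (finPairEmbedding k), μ (f q) := by
    calc _ = ∏ m : Fin k, (∏ b : Fin 2, (1 + μ (f (finPairEmbedding k ⟨m, b⟩))) - 1) :=
          prod_congr rfl fun m _ => by simp [μ, Fin.prod_univ_two]; rfl
      _ = _ := by simp_rw [prod_prod_one_add_sub_one, prod_map]
  calc _ = ∑ c ∈ Fintype.piFinset fun _ => (univ : Finset (Fin 2)).powerset.erase ∅,
        ∑ f ∈ univ.filter (fun f : Fin (2 * k) → Fin n => Function.Injective f),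
          ∏ q ∈ (univ.sigma c).map (finPairEmbedding k), μ (f q) := by
        rw [sum_comm]
        exact sum_congr rfl fun f _ => hexpand f
    _ = n.descFactorial (2 * k) *
          ∑ c ∈ Fintype.piFinset fun _ => (univ : Finset (Fin 2)).powerset.erase ∅,
            Hnorm n (∑ m, #(c m)) μ := by
        simp_rw [mul_sum, sum_filter_injective_prod_eq_descFactorial_mul_Hnorm, card_map,
          card_sigma, Fintype.card_fin]
        rfl
    _ = _ := by
        rw [sum_piFinset_nonempty_subsets_fin_two k (fun d => Hnorm n d μ),
          Nat.descFactorial_eq_factorial_mul_choose]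
        push_cast
        ring
end
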